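/- Let 𝝃 : SO(3) → ℂ satisfy 𝝃(A·Z(θ)) = e^{−iθ}·𝝃(A) for all A ∈ SO(3) and θ ∈ ℝ. Then the assignment ξ(p) = A·(Re 𝝃(A), Im 𝝃(A), 0)ᵀ, for any A ∈ SO(3) with third column A₃ = p, is well defined (i.e. if A, B ∈ SO(3) satisfy A₃ = B₃, then A·(Re 𝝃(A), Im 𝝃(A), 0)ᵀ = B·(Re 𝝃(B), Im 𝝃(B), 0)ᵀ), and the resulting vector ξ(p) is orthogonal to p, so ξ is a tangent vector field on S². -/

import Mathlib

open Matrix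

/-- Rotation about the `z`-axis by angle `θ`. -/
noncomputable def Zmat (θ : ℝ) : Matrix (Fin 3) (Fin 3) ℝ :=
  !![Real.cos θ, -Real.sin θ, 0; Real.sin θ, Real.cos θ, 0; 0, 0, 1]

/-- Rotation about the `y`-axis by angle `β`. -/
noncomputable def Ymat (β : ℝ) : Matrix (Fin 3) (Fin 3) ℝ :=
  !![Real.cos β, 0, Real.sin β; 0, 1, 0; -Real.sin β, 0, Real.cos β]

/-- `A` is a member of `SO(3)`: it is orthogonal and has determinant `1`. -/
def IsSO3 (A : Matrix (Fin 3) (Fin 3) ℝ) : Prop := Aᵀ * A = 1 ∧ A.det = 1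

/-!
The stabiliser of `e₃` in `SO(3)` is the group of rotations `Z(θ)`: an orthogonal matrix fixing
`e₃` also has `e₃` as its third row, and its upper-left block lies in `SO(2)`. Hence two frames
with the same third column differ by a right factor `Z(θ)`. Identifying the `xy`-plane with `ℂ`,
`Z(θ)` acts as multiplication by `e^{iθ}`, which the equivariance factor `e^{-iθ}` cancels.
Orthogonality to `A₃ = A e₃` holds because `A` is an isometry and `(Re 𝝃, Im 𝝃, 0) ⊥ e₃`.
-/

lemma transpose_mulVec_eq_self_of_mulVec_eq_self {n R : Type*} [Fintype n] [DecidableEq n]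
    [CommSemiring R] {A : Matrix n n R} (hA : Aᵀ * A = 1) {v : n → R} (hv : A *ᵥ v = v) :
    Aᵀ *ᵥ v = v := by
  conv_lhs => rw [← hv, mulVec_mulVec, hA, one_mulVec]

lemma dotProduct_mulVec_mulVec_of_transpose_mul_self {n R : Type*} [Fintype n] [DecidableEq n]
    [CommSemiring R] {A : Matrix n n R} (hA : Aᵀ * A = 1) (v w : n → R) :
    (A *ᵥ v) ⬝ᵥ (A *ᵥ w) = v ⬝ᵥ w := by
  rw [dotProduct_mulVec, vecMul_mulVec, hA, vecMul_one]

lemma exists_cos_sin_eq_of_sq_add_sq_eq_one {a c : ℝ} (h : a ^ 2 + c ^ 2 = 1) :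
    ∃ θ : ℝ, Real.cos θ = a ∧ Real.sin θ = c := by
  have hz : ‖(⟨a, c⟩ : ℂ)‖ = 1 := by
    rw [Complex.norm_def, Complex.normSq_mk, ← sq, ← sq, h, Real.sqrt_one]
  have hz0 : (⟨a, c⟩ : ℂ) ≠ 0 := by
    rintro h0; rw [h0, norm_zero] at hz; exact zero_ne_one hz
  exact ⟨Complex.arg ⟨a, c⟩, by rw [Complex.cos_arg hz0, hz, div_one],
    by rw [Complex.sin_arg, hz, div_one]⟩

lemma IsSO3.exists_eq_Zmat_of_mulVec_single {C : Matrix (Fin 3) (Fin 3) ℝ} (hC : IsSO3 C)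
    (he : C *ᵥ Pi.single 2 1 = Pi.single 2 1) : ∃ θ, C = Zmat θ := by
  have hcol : ∀ i, C i 2 = (Pi.single 2 1 : Fin 3 → ℝ) i := fun i => by
    simpa [mulVec_single_one] using congrFun he i
  have hrow : ∀ j, C 2 j = (Pi.single 2 1 : Fin 3 → ℝ) j := fun j => by
    simpa [mulVec_single_one] using
      congrFun (transpose_mulVec_eq_self_of_mulVec_eq_self hC.1 he) j
  have hnorm : C 0 0 ^ 2 + C 1 0 ^ 2 = 1 := by
    simpa [sq, mul_apply, Fin.sum_univ_three, hrow] using congrFun (congrFun hC.1 0) 0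
  have horth : C 0 0 * C 0 1 + C 1 0 * C 1 1 = 0 := by
    simpa [mul_apply, Fin.sum_univ_three, hrow] using congrFun (congrFun hC.1 0) 1
  have hdet : C 0 0 * C 1 1 - C 0 1 * C 1 0 = 1 := by
    simpa [det_fin_three, hcol, hrow] using hC.2
  have h01 : C 0 1 = -C 1 0 := by
    linear_combination C 0 0 * horth - C 1 0 * hdet - C 0 1 * hnorm
  have h11 : C 1 1 = C 0 0 := by
    linear_combination C 0 0 * hdet + C 1 0 * horth - C 1 1 * hnorm
  obtain ⟨θ, hcos, hsin⟩ := exists_cos_sin_eq_of_sq_add_sq_eq_one hnorm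
  refine ⟨θ, ?_⟩
  ext i j
  fin_cases i <;> fin_cases j <;> simp [Zmat, hcos, hsin, hcol, hrow, h01, h11]

lemma IsSO3.transpose_mul {A B : Matrix (Fin 3) (Fin 3) ℝ} (hA : IsSO3 A) (hB : IsSO3 B) :
    IsSO3 (Aᵀ * B) := by
  refine ⟨?_, by rw [det_mul, det_transpose, hA.2, hB.2, one_mul]⟩
  rw [Matrix.transpose_mul, transpose_transpose, Matrix.mul_assoc, ← Matrix.mul_assoc A,
    mul_eq_one_comm.mp hA.1, Matrix.one_mul, hB.1]

lemma IsSO3.exists_eq_mul_Zmat {A B : Matrix (Fin 3) (Fin 3) ℝ} (hA : IsSO3 A) (hB : IsSO3 B)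
    (h : Aᵀ 2 = Bᵀ 2) : ∃ θ, B = A * Zmat θ := by
  have hB3 : B *ᵥ Pi.single 2 1 = A *ᵥ Pi.single 2 1 := by
    rw [mulVec_single_one, mulVec_single_one]; exact h.symm
  obtain ⟨θ, hθ⟩ := (hA.transpose_mul hB).exists_eq_Zmat_of_mulVec_single <| by
    rw [← mulVec_mulVec, hB3, mulVec_mulVec, hA.1, one_mulVec]
  exact ⟨θ, by rw [← hθ, ← Matrix.mul_assoc, mul_eq_one_comm.mp hA.1, Matrix.one_mul]⟩

lemma Zmat_mulVec (θ : ℝ) (z : ℂ) : Zmat θ *ᵥ ![z.re, z.im, 0] =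
    ![(Complex.exp (θ * Complex.I) * z).re, (Complex.exp (θ * Complex.I) * z).im, 0] := by
  rw [Complex.mul_re, Complex.mul_im, Complex.exp_ofReal_mul_I_re, Complex.exp_ofReal_mul_I_im]
  ext i
  fin_cases i <;> simp [Zmat, mulVec, sub_eq_add_neg, add_comm]

/-- Given an equivariant function `𝝃 : SO(3) → ℂ` with `𝝃(A·Z(θ)) = e^{-iθ} 𝝃(A)`, the
assignment `ξ(p) = A·(Re 𝝃(A), Im 𝝃(A), 0)ᵀ` for `A₃ = p` is well defined, and the resulting
vector is orthogonal to `p`, so `ξ` is a tangent vector field on `S²`. -/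
theorem assocFun_inverse_well_defined_tangent (xi : Matrix (Fin 3) (Fin 3) ℝ → ℂ)
    (hxi : ∀ A, IsSO3 A → ∀ θ : ℝ, xi (A * Zmat θ) = Complex.exp (-θ * Complex.I) * xi A) :
    (∀ A B, IsSO3 A → IsSO3 B → Aᵀ 2 = Bᵀ 2 →
      A.mulVec ![(xi A).re, (xi A).im, 0] = B.mulVec ![(xi B).re, (xi B).im, 0]) ∧
    (∀ A, IsSO3 A → A.mulVec ![(xi A).re, (xi A).im, 0] ⬝ᵥ (Aᵀ 2) = 0) := by
  refine ⟨fun A B hA hB h => ?_, fun A hA => ?_⟩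
  · obtain ⟨θ, rfl⟩ := hA.exists_eq_mul_Zmat hB h
    rw [hxi A hA θ, ← mulVec_mulVec, Zmat_mulVec, ← mul_assoc, ← Complex.exp_add]
    simp
  · rw [show Aᵀ 2 = A *ᵥ Pi.single 2 1 from (mulVec_single_one A 2).symm,
      dotProduct_mulVec_mulVec_of_transpose_mul_self hA.1]
    simp
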